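/- arXiv:1201.5232 — 4 statements merged into one kernel-verified Lean document; each statement's English description precedes it below -/
import Mathlib

section
/- Let u = (u_1,…,u_n) and v = (v_1,…,v_n) be vectors in ℂ^n, and set x = (|u_1|,…,|u_n|), y = (|v_1|,…,|v_n|) and z = (|u_1 − v_1|,…,|u_n − v_n|). Let f : [0,∞) → [0,∞) be a monotonically nondecreasing, subadditive function. Then for every k with 1 ≤ k ≤ n, ∑_{i=1}^k |f(x_i^↓) − f(y_i^↓)| ≤ ∑_{i=1}^k f(z_i^↓), where w^↓ denotes the rearrangement of the vector w in non-increasing order. -/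
/-- The rearrangement of a real vector in non-increasing order: `sortDesc w i` is the
`i`-th largest entry of `w`. -/
noncomputable def sortDesc {n : ℕ} (w : Fin n → ℝ) : Fin n → ℝ :=
  fun i => (w ∘ Tuple.sort w) i.rev

/-!
Monotonicity of sorting and of `f` puts both `f x↓ᵢ` and `f y↓ᵢ` in the interval
`[f (x ⊓ y)↓ᵢ, f (x ⊔ y)↓ᵢ]`, so the left side is at most
`∑_{i<k} f (x ⊔ y)↓ᵢ - ∑_{i<k} f (x ⊓ y)↓ᵢ`. As `f` is monotone, `f w↓ = (f ∘ w)↓`, and the sum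
of the `k` largest entries of a vector is its largest sum over `k` entries (Ky Fan), hence
subadditive in the vector. Finally `x ⊔ y = x ⊓ y + |x - y| ≤ x ⊓ y + z`, so
`f ∘ (x ⊔ y) ≤ f ∘ (x ⊓ y) + f ∘ z` by subadditivity of `f`.
-/

open Finset

theorem Finset.sum_le_sum_of_card_eq_of_le {ι M : Type*} [DecidableEq ι] [AddCommMonoid M]
    [LinearOrder M] [IsOrderedAddMonoid M] {s t : Finset ι} {g : ι → M} (hst : #s = #t)
    (h : ∀ a ∈ s \ t, ∀ b ∈ t \ s, g a ≤ g b) :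
    ∑ i ∈ s, g i ≤ ∑ i ∈ t, g i := by
  rw [← sum_inter_add_sum_sdiff s t, ← sum_inter_add_sum_sdiff t s, inter_comm t s]
  refine add_le_add_right ?_ _
  rcases (s \ t).eq_empty_or_nonempty with hempty | hne
  · rw [hempty, card_eq_zero.1 ((card_sdiff_comm hst).symm.trans (card_eq_zero.2 hempty))]
  obtain ⟨a₀, ha₀, hmax⟩ := exists_max_image (s \ t) g hne
  calc ∑ a ∈ s \ t, g a ≤ #(s \ t) • g a₀ := sum_le_card_nsmul _ _ _ hmax
    _ = #(t \ s) • g a₀ := by rw [card_sdiff_comm hst]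
    _ ≤ ∑ b ∈ t \ s, g b := card_nsmul_le_sum _ _ _ (h a₀ ha₀)

theorem Antitone.sum_le_sum_filter_val_lt {n k : ℕ} {M : Type*} [AddCommMonoid M]
    [LinearOrder M] [IsOrderedAddMonoid M] {g : Fin n → M} (hg : Antitone g)
    {s : Finset (Fin n)} (hs : #s = k) :
    ∑ i ∈ s, g i ≤ ∑ i ∈ univ.filter (fun i : Fin n => (i : ℕ) < k), g i := by
  have hkn : k ≤ n := hs ▸ card_le_univ s |>.trans_eq (Fintype.card_fin n)
  refine sum_le_sum_of_card_eq_of_le ?_ fun a ha b hb => hg ?_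
  · rw [hs, Fin.card_filter_val_lt, min_eq_right hkn]
  · simp only [mem_sdiff, mem_filter, mem_univ, true_and] at ha hb
    rw [Fin.le_def]
    omega

section sortDesc

variable {n : ℕ}

theorem sortDesc_eq_comp (w : Fin n → ℝ) :
    sortDesc w = w ∘ (Fin.revPerm.trans (Tuple.sort w)) :=
  rfl

theorem antitone_sortDesc (w : Fin n → ℝ) : Antitone (sortDesc w) :=
  (Tuple.monotone_sort w).comp_antitone Fin.rev_anti

theorem sortDesc_mono {w w' : Fin n → ℝ} (h : w ≤ w') : sortDesc w ≤ sortDesc w' := by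
  intro i
  set σ := Fin.revPerm.trans (Tuple.sort w)
  set τ := Fin.revPerm.trans (Tuple.sort w')
  -- `σ '' Iic i` and `τ '' Ici i` have `(i + 1) + (n - i)` elements in total, so they meet.
  obtain ⟨c, hc⟩ : ((Iic i).map σ.toEmbedding ∩ (Ici i).map τ.toEmbedding).Nonempty := by
    refine inter_nonempty_of_card_lt_card_add_card (subset_univ _) (subset_univ _) ?_
    simp only [card_map, card_univ, Fintype.card_fin, Fin.card_Iic, Fin.card_Ici]
    omega
  obtain ⟨a, ha, rfl⟩ := mem_map.1 (mem_inter.1 hc).1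
  obtain ⟨b, hb, hab⟩ := mem_map.1 (mem_inter.1 hc).2
  calc sortDesc w i ≤ sortDesc w a := antitone_sortDesc w (mem_Iic.1 ha)
    _ = w (σ a) := rfl
    _ ≤ w' (σ a) := h _
    _ = sortDesc w' b := congrArg w' hab.symm
    _ ≤ sortDesc w' i := antitone_sortDesc w' (mem_Ici.1 hb)

theorem sortDesc_comp_of_monotoneOn {s : Set ℝ} {f : ℝ → ℝ} (hf : MonotoneOn f s)
    {w : Fin n → ℝ} (hw : ∀ j, w j ∈ s) (i : Fin n) :
    sortDesc (fun j => f (w j)) i = f (sortDesc w i) := by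
  have hsorted : (fun j => f (w j)) ∘ Tuple.sort w =
      (fun j => f (w j)) ∘ Tuple.sort (fun j => f (w j)) :=
    Tuple.comp_sort_eq_comp_iff_monotone.2
      fun a b hab => hf (hw _) (hw _) (Tuple.monotone_sort w hab)
  exact congrFun hsorted.symm i.rev

theorem abs_sub_le_sortDesc_sup_sub_sortDesc_inf {s : Set ℝ} {f : ℝ → ℝ}
    (hf : MonotoneOn f s) {w w' : Fin n → ℝ} (hw : ∀ j, w j ∈ s) (hw' : ∀ j, w' j ∈ s)
    (i : Fin n) :
    |f (sortDesc w i) - f (sortDesc w' i)| ≤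
      f (sortDesc (w ⊔ w') i) - f (sortDesc (w ⊓ w') i) := by
  have hinf : ∀ j, (w ⊓ w') j ∈ s := fun j => min_rec' (· ∈ s) (hw j) (hw' j)
  have hsup : ∀ j, (w ⊔ w') j ∈ s := fun j => max_rec' (· ∈ s) (hw j) (hw' j)
  have hmono {v v' : Fin n → ℝ} (hv : ∀ j, v j ∈ s) (hv' : ∀ j, v' j ∈ s) (h : v ≤ v') :
      f (sortDesc v i) ≤ f (sortDesc v' i) :=
    hf (hv _) (hv' _) (sortDesc_mono h i)
  have := hmono hinf hw inf_le_left
  have := hmono hinf hw' inf_le_right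
  have := hmono hw hsup le_sup_left
  have := hmono hw' hsup le_sup_right
  exact abs_sub_le_iff.2 ⟨by linarith, by linarith⟩

theorem sum_le_sum_sortDesc {k : ℕ} (w : Fin n → ℝ) {s : Finset (Fin n)} (hs : #s = k) :
    ∑ j ∈ s, w j ≤ ∑ i ∈ univ.filter (fun i : Fin n => (i : ℕ) < k), sortDesc w i := by
  set σ := Fin.revPerm.trans (Tuple.sort w)
  calc ∑ j ∈ s, w j = ∑ i ∈ s.map σ.symm.toEmbedding, sortDesc w i := by
        simp [sortDesc_eq_comp, σ]
    _ ≤ _ := (antitone_sortDesc w).sum_le_sum_filter_val_lt (by rw [card_map, hs])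

theorem exists_card_eq_sum_sortDesc_eq {k : ℕ} (hkn : k ≤ n) (w : Fin n → ℝ) :
    ∃ s : Finset (Fin n), #s = k ∧
      ∑ i ∈ univ.filter (fun i : Fin n => (i : ℕ) < k), sortDesc w i = ∑ j ∈ s, w j := by
  refine ⟨(univ.filter (fun i : Fin n => (i : ℕ) < k)).map
    (Fin.revPerm.trans (Tuple.sort w)).toEmbedding, ?_, ?_⟩
  · rw [card_map, Fin.card_filter_val_lt, min_eq_right hkn]
  · simp [sortDesc_eq_comp]

theorem sum_sortDesc_le_add_of_le {k : ℕ} (hkn : k ≤ n) {g g₁ g₂ : Fin n → ℝ}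
    (h : ∀ j, g j ≤ g₁ j + g₂ j) :
    ∑ i ∈ univ.filter (fun i : Fin n => (i : ℕ) < k), sortDesc g i ≤
      ∑ i ∈ univ.filter (fun i : Fin n => (i : ℕ) < k), sortDesc g₁ i +
        ∑ i ∈ univ.filter (fun i : Fin n => (i : ℕ) < k), sortDesc g₂ i := by
  obtain ⟨s, hs, hsum⟩ := exists_card_eq_sum_sortDesc_eq hkn g
  calc _ = ∑ j ∈ s, g j := hsum
    _ ≤ ∑ j ∈ s, g₁ j + ∑ j ∈ s, g₂ j := by
      rw [← sum_add_distrib]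
      exact sum_le_sum fun j _ => h j
    _ ≤ _ := add_le_add (sum_le_sum_sortDesc g₁ hs) (sum_le_sum_sortDesc g₂ hs)

end sortDesc

theorem abs_diff_sorted_subadditive_general
    {n : ℕ} (u v : Fin n → ℂ) (f : ℝ → ℝ)
    (hf_mono : MonotoneOn f (Set.Ici 0))
    (hf_subadd : ∀ x ∈ Set.Ici (0 : ℝ), ∀ y ∈ Set.Ici (0 : ℝ), f (x + y) ≤ f x + f y)
    (k : ℕ) (hkn : k ≤ n) :
    ∑ i ∈ Finset.univ.filter (fun i : Fin n => (i : ℕ) < k),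
        |f (sortDesc (fun j => ‖u j‖) i) -
          f (sortDesc (fun j => ‖v j‖) i)| ≤
      ∑ i ∈ Finset.univ.filter (fun i : Fin n => (i : ℕ) < k),
        f (sortDesc (fun j => ‖u j - v j‖) i) := by
  set x : Fin n → ℝ := fun j => ‖u j‖
  set y : Fin n → ℝ := fun j => ‖v j‖
  set z : Fin n → ℝ := fun j => ‖u j - v j‖
  have hx : ∀ j, x j ∈ Set.Ici 0 := fun j => norm_nonneg _
  have hy : ∀ j, y j ∈ Set.Ici 0 := fun j => norm_nonneg _
  have hz : ∀ j, z j ∈ Set.Ici 0 := fun j => norm_nonneg _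
  have hinf : ∀ j, (x ⊓ y) j ∈ Set.Ici 0 := fun j => Set.mem_Ici.2 (le_inf (hx j) (hy j))
  have hsup : ∀ j, (x ⊔ y) j ∈ Set.Ici 0 := fun j => Set.mem_Ici.2 (le_sup_of_le_left (hx j))
  have hsplit : ∀ j, f ((x ⊔ y) j) ≤ f ((x ⊓ y) j) + f (z j) := fun j => by
    have hle : (x ⊔ y) j ≤ (x ⊓ y) j + z j := by
      have := abs_norm_sub_norm_le (u j) (v j)
      have := max_sub_min_eq_abs' (x j) (y j)
      simp only [Pi.sup_apply, Pi.inf_apply]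
      linarith
    exact (hf_mono (hsup j) (Set.mem_Ici.2 (add_nonneg (hinf j) (hz j))) hle).trans
      (hf_subadd _ (hinf j) _ (hz j))
  have htop := sum_sortDesc_le_add_of_le hkn hsplit
  simp only [sortDesc_comp_of_monotoneOn hf_mono hsup, sortDesc_comp_of_monotoneOn hf_mono hinf,
    sortDesc_comp_of_monotoneOn hf_mono hz] at htop
  calc _ ≤ ∑ i ∈ Finset.univ.filter (fun i : Fin n => (i : ℕ) < k),
        (f (sortDesc (x ⊔ y) i) - f (sortDesc (x ⊓ y) i)) :=
        sum_le_sum fun i _ => abs_sub_le_sortDesc_sup_sub_sortDesc_inf hf_mono hx hy i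
    _ ≤ _ := by
      rw [sum_sub_distrib]
      linarith

/-- For vectors `u, v ∈ ℂⁿ`, let `x = |u|`, `y = |v|`, `z = |u − v|` entrywise.  If
`f : [0,∞) → [0,∞)` is nondecreasing and subadditive, then for every `1 ≤ k ≤ n`,
`∑_{i<k} |f(x_i^↓) − f(y_i^↓)| ≤ ∑_{i<k} f(z_i^↓)`. -/
theorem abs_diff_sorted_subadditive
    {n : ℕ} (u v : Fin n → ℂ) (f : ℝ → ℝ)
    (hf_mono : MonotoneOn f (Set.Ici 0))
    (hf_subadd : ∀ x ∈ Set.Ici (0 : ℝ), ∀ y ∈ Set.Ici (0 : ℝ), f (x + y) ≤ f x + f y)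
    (hf_nonneg : ∀ x ∈ Set.Ici (0 : ℝ), 0 ≤ f x)
    (k : ℕ) (hk1 : 1 ≤ k) (hkn : k ≤ n) :
    ∑ i ∈ Finset.univ.filter (fun i : Fin n => (i : ℕ) < k),
        |f (sortDesc (fun j => ‖u j‖) i) -
          f (sortDesc (fun j => ‖v j‖) i)| ≤
      ∑ i ∈ Finset.univ.filter (fun i : Fin n => (i : ℕ) < k),
        f (sortDesc (fun j => ‖u j - v j‖) i) :=
  abs_diff_sorted_subadditive_general u v f hf_mono hf_subadd k hkn
end

section
/- Let X and Y be n×n positive semidefinite complex matrices. Then the trace norm of their commutator satisfies ‖XY − YX‖_1 ≤ tr(X) · tr(Y). -/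
open scoped ComplexOrder

/-- The trace norm `‖Z‖₁ = tr ((Zᴴ Z)^{1/2})` of a square complex matrix, i.e. the sum of its
singular values. -/
noncomputable def traceNorm {n : ℕ} (Z : Matrix (Fin n) (Fin n) ℂ) : ℝ :=
  ((Matrix.posSemidef_conjTranspose_mul_self Z).1.eigenvectorUnitary.1 *
    Matrix.diagonal ((fun x : ℝ => (x : ℂ)) ∘ Real.sqrt ∘ (Matrix.posSemidef_conjTranspose_mul_self Z).1.eigenvalues) *
    (star (Matrix.posSemidef_conjTranspose_mul_self Z).1.eigenvectorUnitary : Matrix (Fin n) (Fin n) ℂ)).trace.re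

/-!
The commutator `Z = XY - YX` is skew-Hermitian, so `iZ` is Hermitian and `|Z| = |iZ| = U (iZ)`
for a unitary `U` (the sign of `iZ`). Hence `‖Z‖₁ = Re tr (U (iZ)) ≤ |tr (X (YU - UY))|`.
For `X ≥ 0` one has `|tr (X M)| ≤ tr X · ‖M‖`, and `YU - UY = (Y - U Y U⋆) U` is a difference of
two positive matrices of operator norm at most `‖Y‖ ≤ tr Y`, times a unitary, so its operator
norm is at most `tr Y`.
-/

open Matrix
open scoped MatrixOrder

lemma CStarAlgebra.norm_sub_le_max_of_nonneg {A : Type*} [CStarAlgebra A] [PartialOrder A]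
    [StarOrderedRing A] {a b : A} (ha : 0 ≤ a) (hb : 0 ≤ b) :
    ‖a - b‖ ≤ max ‖a‖ ‖b‖ := by
  obtain h | h := subsingleton_or_nontrivial A
  · simp [Subsingleton.elim (a - b) 0]
  set r := max ‖a‖ ‖b‖
  have hupper : a - b ≤ algebraMap ℝ A r :=
    calc a - b ≤ a := sub_le_self a hb
      _ ≤ algebraMap ℝ A ‖a‖ := IsSelfAdjoint.le_algebraMap_norm_self
      _ ≤ algebraMap ℝ A r := algebraMap_le_algebraMap.mpr (le_max_left _ _)
  have hlower : algebraMap ℝ A (-r) ≤ a - b :=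
    calc algebraMap ℝ A (-r) ≤ -algebraMap ℝ A ‖b‖ := by
          rw [← map_neg]; exact algebraMap_le_algebraMap.mpr (by simp [r])
      _ ≤ -b := neg_le_neg IsSelfAdjoint.le_algebraMap_norm_self
      _ ≤ a - b := by simpa using ha
  have hself : IsSelfAdjoint (a - b) := (IsSelfAdjoint.of_nonneg ha).sub (.of_nonneg hb)
  rw [le_algebraMap_iff_spectrum_le] at hupper
  rw [algebraMap_le_iff_le_spectrum] at hlower
  rcases CStarAlgebra.norm_or_neg_norm_mem_spectrum hself with h | h
  · exact hupper _ h
  · linarith [hlower _ h]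

namespace Matrix

lemma trace_mul_commutator {n R : Type*} [Fintype n] [CommRing R] (U X Y : Matrix n n R) :
    (U * (X * Y - Y * X)).trace = (X * (Y * U - U * Y)).trace := by
  simp only [mul_sub, trace_sub, ← mul_assoc]
  rw [trace_mul_cycle X Y U, ← trace_mul_cycle U Y X]

section

variable {𝕜 n : Type*} [RCLike 𝕜] [Fintype n] [DecidableEq n]

lemma IsHermitian.exists_mem_unitary_mul_eq_abs {A : Matrix n n 𝕜} (hA : A.IsHermitian) :
    ∃ U ∈ unitary (Matrix n n 𝕜), U * A = CFC.abs A := by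
  set sgn : ℝ → ℝ := fun x => if 0 ≤ x then 1 else -1
  -- the spectrum is finite, so the discontinuity of `sgn` does not matter
  have hcont : ContinuousOn sgn (spectrum ℝ A) := A.finite_real_spectrum.continuousOn _
  refine ⟨cfc sgn A, (cfc_unitary_iff sgn A hA hcont).2 fun x _ => ?_, ?_⟩
  · by_cases hx : 0 ≤ x <;> simp [sgn, hx]
  calc cfc sgn A * A = cfc sgn A * cfc id A := by rw [cfc_id ℝ A]
    _ = cfc (fun x => sgn x * id x) A := (cfc_mul sgn id A).symm
    _ = cfc (‖·‖) A := cfc_congr fun x _ => by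
      by_cases hx : 0 ≤ x
      · simp [sgn, hx, abs_of_nonneg hx]
      · simp [sgn, hx, abs_of_neg (not_le.mp hx)]
    _ = CFC.abs A := (CFC.abs_eq_cfc_norm A hA).symm

open scoped Matrix.Norms.L2Operator InnerProductSpace

lemma PosSemidef.norm_trace_mul_le {A : Matrix n n 𝕜} (hA : A.PosSemidef) (B : Matrix n n 𝕜) :
    ‖(A * B).trace‖ ≤ RCLike.re A.trace * ‖B‖ := by
  set b := hA.1.eigenvectorBasis
  set μ := hA.1.eigenvalues
  set T := toEuclideanCLM (n := n) (𝕜 := 𝕜) B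
  have htrace : (A * B).trace = ∑ j, (μ j : 𝕜) * ⟪b j, T (b j)⟫_𝕜 := by
    rw [trace_mul_comm, ← trace_toLin_eq _ (EuclideanSpace.basisFun n 𝕜).toBasis,
      ← toEuclideanLin_eq_toLin_orthonormal, LinearMap.trace_eq_sum_inner _ b]
    refine Finset.sum_congr rfl fun j _ => ?_
    have hb : toEuclideanLin (B * A) (b j) = (μ j : 𝕜) • T (b j) := by
      apply WithLp.ofLp_injective
      rw [toLpLin_apply, WithLp.ofLp_smul, ofLp_toEuclideanCLM, ← mulVec_mulVec,
        hA.1.mulVec_eigenvectorBasis, mulVec_smul, RCLike.real_smul_eq_coe_smul (K := 𝕜)]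
    rw [hb, inner_smul_right]
  have hterm (j : n) : ‖⟪b j, T (b j)⟫_𝕜‖ ≤ ‖B‖ :=
    calc ‖⟪b j, T (b j)⟫_𝕜‖ ≤ ‖b j‖ * ‖T (b j)‖ := norm_inner_le_norm _ _
      _ ≤ ‖b j‖ * (‖T‖ * ‖b j‖) := by gcongr; exact T.le_opNorm _
      _ = ‖B‖ := by simp [b, T, l2_opNorm_toEuclideanCLM]
  calc ‖(A * B).trace‖ ≤ ∑ j, ‖(μ j : 𝕜) * ⟪b j, T (b j)⟫_𝕜‖ := htrace ▸ norm_sum_le _ _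
    _ ≤ ∑ j, μ j * ‖B‖ := by
      refine Finset.sum_le_sum fun j _ => ?_
      rw [norm_mul, RCLike.norm_ofReal, abs_of_nonneg (hA.eigenvalues_nonneg j)]
      exact mul_le_mul_of_nonneg_left (hterm j) (hA.eigenvalues_nonneg j)
    _ = RCLike.re A.trace * ‖B‖ := by
      simp [← Finset.sum_mul, hA.1.trace_eq_sum_eigenvalues, μ]

lemma PosSemidef.l2_opNorm_le_re_trace {A : Matrix n n ℂ} (hA : A.PosSemidef) :
    ‖A‖ ≤ A.trace.re := by
  have hsum : A.trace.re = ∑ j, hA.1.eigenvalues j := by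
    simp [hA.1.trace_eq_sum_eigenvalues]
  rw [CStarAlgebra.norm_le_iff_le_algebraMap A (Complex.nonneg_iff.mp hA.trace_nonneg).1
      hA.nonneg, le_algebraMap_iff_spectrum_le hA.1, hA.1.spectrum_real_eq_range_eigenvalues, hsum]
  rintro _ ⟨j, rfl⟩
  exact Finset.single_le_sum (fun i _ => hA.eigenvalues_nonneg i) (Finset.mem_univ j)

lemma PosSemidef.l2_opNorm_commutator_le {A U : Matrix n n ℂ} (hA : A.PosSemidef)
    (hU : U ∈ unitary (Matrix n n ℂ)) :
    ‖A * U - U * A‖ ≤ A.trace.re := by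
  have hconj : A * U - U * A = (A - U * A * star U) * U := by
    rw [sub_mul, mul_assoc (U * A), Unitary.star_mul_self_of_mem hU, mul_one]
  calc ‖A * U - U * A‖ = ‖A - U * A * star U‖ := by
        rw [hconj, CStarRing.norm_mul_mem_unitary _ hU]
    _ ≤ max ‖A‖ ‖U * A * star U‖ := CStarAlgebra.norm_sub_le_max_of_nonneg hA.nonneg
        (star_right_conjugate_nonneg hA.nonneg U)
    _ = ‖A‖ := by
        rw [CStarRing.norm_mul_mem_unitary _ (Unitary.star_mem hU),
          CStarRing.norm_mem_unitary_mul _ hU, max_self]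
    _ ≤ A.trace.re := hA.l2_opNorm_le_re_trace

lemma PosSemidef.norm_trace_mul_commutator_le {X Y U : Matrix n n ℂ} (hX : X.PosSemidef)
    (hY : Y.PosSemidef) (hU : U ∈ unitary (Matrix n n ℂ)) :
    ‖(X * (Y * U - U * Y)).trace‖ ≤ X.trace.re * Y.trace.re :=
  (hX.norm_trace_mul_le _).trans <| mul_le_mul_of_nonneg_left (hY.l2_opNorm_commutator_le hU)
    (Complex.nonneg_iff.mp hX.trace_nonneg).1

end

end Matrix

lemma traceNorm_eq_re_trace_abs {n : ℕ} (Z : Matrix (Fin n) (Fin n) ℂ) :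
    traceNorm Z = (CFC.abs Z).trace.re := by
  have hZ := posSemidef_conjTranspose_mul_self Z
  have habs : CFC.abs Z = hZ.1.cfc Real.sqrt := by
    rw [← hZ.1.cfc_eq, CFC.abs, star_eq_conjTranspose, CFC.sqrt_eq_real_sqrt _ hZ.nonneg,
      cfcₙ_eq_cfc]
  rw [habs]
  rfl

/-- For positive semidefinite matrices `X`, `Y`, the trace norm of the commutator satisfies
`‖XY − YX‖₁ ≤ tr X · tr Y`. -/
theorem traceNorm_commutator_le
    {n : ℕ} (X Y : Matrix (Fin n) (Fin n) ℂ)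
    (hX : X.PosSemidef) (hY : Y.PosSemidef) :
    traceNorm (X * Y - Y * X) ≤ X.trace.re * Y.trace.re := by
  set Z := X * Y - Y * X
  have hH : (Complex.I • Z).IsHermitian := by
    rw [IsHermitian, conjTranspose_smul, conjTranspose_sub, conjTranspose_mul, conjTranspose_mul,
      hX.1, hY.1, Complex.star_def, Complex.conj_I, neg_smul, ← smul_neg, neg_sub]
  obtain ⟨U, hU, hUH⟩ := hH.exists_mem_unitary_mul_eq_abs
  calc traceNorm Z = (CFC.abs (Complex.I • Z)).trace.re := by
        rw [traceNorm_eq_re_trace_abs, CFC.abs_smul, Complex.norm_I, one_smul]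
    _ = (Complex.I * (X * (Y * U - U * Y)).trace).re := by
        rw [← hUH, mul_smul_comm, trace_smul, trace_mul_commutator, smul_eq_mul]
    _ ≤ ‖(X * (Y * U - U * Y)).trace‖ := by
        simpa using Complex.re_le_norm (Complex.I * (X * (Y * U - U * Y)).trace)
    _ ≤ X.trace.re * Y.trace.re := hX.norm_trace_mul_commutator_le hY hU
end

section
/- Let H be a real or complex inner product space, let K ≥ 2, and let x_1, …, x_K ∈ H. Then ‖∑_{j=1}^K x_j‖ + (K−2) ∑_{j=1}^K ‖x_j‖ ≥ ∑_{1 ≤ j < k ≤ K} ‖x_j + x_k‖ (Adamovic's generalisation of Hlawka's inequality). -/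
/-! For a pair `j < k` put `a = ‖xⱼ + xₖ‖`, `b = ‖xⱼ‖ + ‖xₖ‖` and `c = ‖∑ x‖ + ∑ ‖x‖`. The triangle
inequality gives `a ≤ b` and, after removing the other vectors from the full sum, `a ≤ c - b`; hence
`(b - a)(c - b - a) ≥ 0`, i.e. `a c ≤ a² + b c - b²`. Summing over the pairs, the inner product
enters only through `∑_{j<k} ‖xⱼ + xₖ‖² = (K - 2) ∑ ‖xⱼ‖² + ‖∑ x‖²`; the same identity for the reals `‖xⱼ‖`
makes the right-hand side collapse to `c (‖∑ x‖ + (K - 2) ∑ ‖x‖)`. -/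

open Finset

section Pairs

variable {ι : Type*} [Fintype ι] [LinearOrder ι]

theorem sum_diag_add_two_nsmul_sum_filter_lt {M : Type*} [AddCommMonoid M] (g : ι → ι → M)
    (hg : ∀ j k, g j k = g k j) :
    ∑ j, g j j + 2 • ∑ p ∈ univ.filter (fun p : ι × ι => p.1 < p.2), g p.1 p.2 =
      ∑ j, ∑ k, g j k := by
  have hswap : ∑ p ∈ univ.filter (fun p : ι × ι => p.2 < p.1), g p.1 p.2 =
      ∑ p ∈ univ.filter (fun p : ι × ι => p.1 < p.2), g p.1 p.2 :=
    sum_nbij' Prod.swap Prod.swap (by simp) (by simp) (by simp) (by simp)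
      (fun p _ => hg p.1 p.2)
  have hdiag : ∑ p ∈ univ.filter (fun p : ι × ι => p.1 = p.2), g p.1 p.2 = ∑ j, g j j := by
    rw [sum_filter, Fintype.sum_prod_type]
    simp
  have htrichotomy : ∑ p : ι × ι, g p.1 p.2 =
      ∑ p ∈ univ.filter (fun p : ι × ι => p.1 = p.2), g p.1 p.2 +
        ∑ p ∈ univ.filter (fun p : ι × ι => p.1 < p.2), g p.1 p.2 +
        ∑ p ∈ univ.filter (fun p : ι × ι => p.2 < p.1), g p.1 p.2 := by
    simp only [sum_filter, ← sum_add_distrib]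
    refine sum_congr rfl fun p _ => ?_
    rcases lt_trichotomy p.1 p.2 with h | h | h
    · simp [h, h.ne, not_lt_of_gt h]
    · simp [h]
    · simp [h, h.ne', not_lt_of_gt h]
  rw [← Fintype.sum_prod_type', htrichotomy, hswap, hdiag, two_nsmul, add_assoc]

theorem sum_filter_lt_add (f : ι → ℝ) :
    ∑ p ∈ univ.filter (fun p : ι × ι => p.1 < p.2), (f p.1 + f p.2) =
      (Fintype.card ι - 1) * ∑ j, f j := by
  have h := sum_diag_add_two_nsmul_sum_filter_lt (fun j k => f j + f k) fun j k => add_comm _ _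
  have hsum : ∑ j, ∑ k, (f j + f k) = 2 * Fintype.card ι * ∑ j, f j := by
    simp only [sum_add_distrib, sum_const, card_univ, nsmul_eq_mul, ← mul_sum]
    ring
  rw [hsum, sum_add_distrib, two_nsmul] at h
  linarith

theorem sum_filter_lt_norm_add_sq {𝕜 E : Type*} [RCLike 𝕜] [NormedAddCommGroup E]
    [InnerProductSpace 𝕜 E] (x : ι → E) :
    ∑ p ∈ univ.filter (fun p : ι × ι => p.1 < p.2), ‖x p.1 + x p.2‖ ^ 2 =
      (Fintype.card ι - 2) * ∑ j, ‖x j‖ ^ 2 + ‖∑ j, x j‖ ^ 2 := by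
  have h := sum_diag_add_two_nsmul_sum_filter_lt (fun j k => ‖x j + x k‖ ^ 2)
    fun j k => by rw [add_comm]
  have hinner : ∑ j, ∑ k, RCLike.re (inner 𝕜 (x j) (x k)) = ‖∑ j, x j‖ ^ 2 := by
    rw [← inner_self_eq_norm_sq (𝕜 := 𝕜), sum_inner, map_sum]
    simp only [inner_sum, map_sum]
  have hsum : ∑ j, ∑ k, ‖x j + x k‖ ^ 2 =
      2 * Fintype.card ι * ∑ j, ‖x j‖ ^ 2 + 2 * ‖∑ j, x j‖ ^ 2 := by
    simp only [norm_add_sq (𝕜 := 𝕜), sum_add_distrib, sum_const, card_univ, nsmul_eq_mul,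
      ← mul_sum, hinner]
    ring
  have hdiag : ∑ j, ‖x j + x j‖ ^ 2 = 4 * ∑ j, ‖x j‖ ^ 2 := by
    rw [mul_sum]
    refine sum_congr rfl fun j _ => ?_
    rw [norm_add_sq (𝕜 := 𝕜), inner_self_eq_norm_sq]
    ring
  rw [hsum, hdiag, two_nsmul] at h
  linarith

theorem sum_filter_lt_add_sq (f : ι → ℝ) :
    ∑ p ∈ univ.filter (fun p : ι × ι => p.1 < p.2), (f p.1 + f p.2) ^ 2 =
      (Fintype.card ι - 2) * ∑ j, f j ^ 2 + (∑ j, f j) ^ 2 := by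
  simpa only [Real.norm_eq_abs, sq_abs] using sum_filter_lt_norm_add_sq (𝕜 := ℝ) f

end Pairs

theorem norm_sum_add_sum_norm_le {ι E : Type*} [Fintype ι] [SeminormedAddCommGroup E]
    (x : ι → E) (s : Finset ι) :
    ‖∑ i ∈ s, x i‖ + ∑ i ∈ s, ‖x i‖ ≤ ‖∑ i, x i‖ + ∑ i, ‖x i‖ := by
  classical
  have hcompl : ‖∑ i ∈ s, x i‖ ≤ ‖∑ i, x i‖ + ∑ i ∈ sᶜ, ‖x i‖ :=
    calc ‖∑ i ∈ s, x i‖ = ‖∑ i, x i - ∑ i ∈ sᶜ, x i‖ := by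
          rw [← sum_add_sum_compl s, add_sub_cancel_right]
      _ ≤ ‖∑ i, x i‖ + ‖∑ i ∈ sᶜ, x i‖ := norm_sub_le _ _
      _ ≤ ‖∑ i, x i‖ + ∑ i ∈ sᶜ, ‖x i‖ := by gcongr; exact norm_sum_le _ _
  linarith [sum_add_sum_compl s fun i => ‖x i‖]

theorem norm_add_le_norm_sum_add_sum_norm_sub {ι E : Type*} [Fintype ι] [SeminormedAddCommGroup E]
    (x : ι → E) {j k : ι} (hjk : j ≠ k) :
    ‖x j + x k‖ ≤ ‖∑ i, x i‖ + ∑ i, ‖x i‖ - (‖x j‖ + ‖x k‖) := by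
  classical
  have h := norm_sum_add_sum_norm_le x {j, k}
  rw [sum_pair hjk, sum_pair hjk] at h
  linarith

theorem Finset.sum_mul_le_of_le_of_le_sub {ι R : Type*} [CommRing R] [LinearOrder R]
    [IsStrictOrderedRing R] (s : Finset ι) (a b : ι → R) (c : R) (hab : ∀ i ∈ s, a i ≤ b i)
    (habc : ∀ i ∈ s, a i ≤ c - b i) :
    (∑ i ∈ s, a i) * c ≤ ∑ i ∈ s, a i ^ 2 + c * ∑ i ∈ s, b i - ∑ i ∈ s, b i ^ 2 := by
  rw [sum_mul, mul_sum, ← sum_add_distrib, ← sum_sub_distrib]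
  refine sum_le_sum fun i hi => ?_
  nlinarith [mul_nonneg (sub_nonneg.mpr (hab i hi)) (sub_nonneg.mpr (habc i hi))]

theorem adamovic_inequality_general
    {𝕜 : Type*} [RCLike 𝕜] {E : Type*} [NormedAddCommGroup E] [InnerProductSpace 𝕜 E]
    (K : ℕ) (x : Fin K → E) :
    ∑ p ∈ Finset.univ.filter (fun p : Fin K × Fin K => p.1 < p.2), ‖x p.1 + x p.2‖ ≤
      ‖∑ j, x j‖ + ((K : ℝ) - 2) * ∑ j, ‖x j‖ := by
  have hle : ∀ p ∈ univ.filter (fun p : Fin K × Fin K => p.1 < p.2),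
      ‖x p.1 + x p.2‖ ≤ ‖x p.1‖ + ‖x p.2‖ := fun p _ => norm_add_le _ _
  have hsq := sum_filter_lt_norm_add_sq (𝕜 := 𝕜) x
  have hlin := sum_filter_lt_add fun j => ‖x j‖
  have hsq_norm := sum_filter_lt_add_sq fun j => ‖x j‖
  beta_reduce at hlin hsq_norm
  rw [Fintype.card_fin] at hsq hlin hsq_norm
  set N := ‖∑ j, x j‖
  set T := ∑ j, ‖x j‖
  have hN : 0 ≤ N := norm_nonneg _
  have hT : 0 ≤ T := sum_nonneg fun j _ => norm_nonneg (x j)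
  have hpair : ∀ p ∈ univ.filter (fun p : Fin K × Fin K => p.1 < p.2),
      ‖x p.1 + x p.2‖ ≤ N + T - (‖x p.1‖ + ‖x p.2‖) := fun p hp =>
    norm_add_le_norm_sum_add_sum_norm_sub x (mem_filter.mp hp).2.ne
  rcases (add_nonneg hN hT).eq_or_lt with hzero | hpos
  · calc _ ≤ ∑ p ∈ univ.filter (fun p : Fin K × Fin K => p.1 < p.2), (‖x p.1‖ + ‖x p.2‖) :=
          sum_le_sum hle
      _ = N + (K - 2) * T := by rw [hlin, show N = 0 by linarith, show T = 0 by linarith]; ring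
  · have key := sum_mul_le_of_le_of_le_sub _ _ _ (N + T) hle hpair
    rw [hsq, hlin, hsq_norm] at key
    refine le_of_mul_le_mul_right ?_ hpos
    linear_combination key

/-- **Adamovic's generalisation of Hlawka's inequality**: in a real or complex inner product
space, for `K ≥ 2` vectors `x₁, …, x_K`,
`‖∑ⱼ xⱼ‖ + (K−2) ∑ⱼ ‖xⱼ‖ ≥ ∑_{j<k} ‖xⱼ + x_k‖`. -/
theorem adamovic_inequality
    {𝕜 : Type*} [RCLike 𝕜] {E : Type*} [NormedAddCommGroup E] [InnerProductSpace 𝕜 E]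
    (K : ℕ) (hK : 2 ≤ K) (x : Fin K → E) :
    ∑ p ∈ Finset.univ.filter (fun p : Fin K × Fin K => p.1 < p.2), ‖x p.1 + x p.2‖ ≤
      ‖∑ j, x j‖ + ((K : ℝ) - 2) * ∑ j, ‖x j‖ :=
  adamovic_inequality_general (𝕜 := 𝕜) K x
end

section
/- Let n ≥ 2, let λ_1, …, λ_n be complex numbers, and let p(z) = ∏_{i=1}^n (z − λ_i). Let I be the (n−1)×(n−1) identity matrix and J the (n−1)×(n−1) all-ones matrix, and define the D-companion matrix M = diag(λ_1, …, λ_{n−1})·(I − J/n) + λ_n·(J/n). Then the characteristic polynomial of M equals p′(z)/n; equivalently, the multiset of eigenvalues of M (with multiplicity) is exactly the multiset of roots of the derivative p′ (with multiplicity). -/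
/-!
Writing `q = ∏_{i<n} (X - λᵢ)` and `qᵢ = q / (X - λᵢ)`, the characteristic matrix of the
D-companion matrix is `diag(X - λᵢ)` plus the rank-one matrix with all entries of row `i` equal
to `(λᵢ - λₙ)/n`, so its determinant is `q + ∑ᵢ (λᵢ - λₙ)/n · qᵢ`. On the other side
`p = q · (X - λₙ)`, and the product rule together with `(X - λₙ) qᵢ = q + (λᵢ - λₙ) qᵢ` gives
`p' = n q + ∑ᵢ (λᵢ - λₙ) qᵢ`.
-/

/-- The `(n−1) × (n−1)` all-ones matrix. -/
def allOnesMatrix (k : ℕ) : Matrix (Fin k) (Fin k) ℂ :=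
  Matrix.of fun _ _ => 1

/-- The D-companion matrix `diag(λ₁, …, λ_{n−1}) (I − J/n) + λ_n (J/n)` of Cheung and Ng,
associated to the roots `λ₁, …, λ_n` of a monic polynomial of degree `n`. -/
noncomputable def dCompanion (n : ℕ) (hn : 2 ≤ n) (lam : Fin n → ℂ) :
    Matrix (Fin (n - 1)) (Fin (n - 1)) ℂ :=
  Matrix.diagonal (fun i : Fin (n - 1) => lam ⟨i, by have := i.isLt; omega⟩) *
      (1 - (n : ℂ)⁻¹ • allOnesMatrix (n - 1)) +
    lam ⟨n - 1, by omega⟩ • ((n : ℂ)⁻¹ • allOnesMatrix (n - 1))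

open Polynomial Matrix Finset

namespace Matrix

variable {m : Type*} [Fintype m] [DecidableEq m]

theorem det_diagonal_add_vecMulVec_of_field {K : Type*} [Field K] {d : m → K}
    (hd : ∀ i, d i ≠ 0) (u v : m → K) :
    (diagonal d + vecMulVec u v).det = ∏ i, d i + ∑ i, u i * v i * ∏ j ∈ univ.erase i, d j := by
  have hfactor : diagonal d + vecMulVec u v =
      diagonal d * (1 + replicateCol Unit (fun i => u i / d i) * replicateRow Unit v) := by
    rw [Matrix.mul_add, Matrix.mul_one, ← Matrix.mul_assoc, vecMulVec_eq Unit]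
    congr 2
    ext i k
    simp [diagonal_mul, mul_div_cancel₀ _ (hd i)]
  rw [hfactor, det_mul, det_diagonal, det_one_add_replicateCol_mul_replicateRow, mul_add, mul_one,
    dotProduct, mul_sum]
  congr 1
  refine sum_congr rfl fun i _ => ?_
  rw [← mul_prod_erase univ d (mem_univ i)]
  field_simp [hd i]

theorem det_diagonal_add_vecMulVec {R : Type*} [CommRing R] [IsDomain R] {d : m → R}
    (hd : ∀ i, d i ≠ 0) (u v : m → R) :
    (diagonal d + vecMulVec u v).det = ∏ i, d i + ∑ i, u i * v i * ∏ j ∈ univ.erase i, d j := by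
  apply IsFractionRing.injective R (FractionRing R)
  set f := algebraMap R (FractionRing R)
  have hfd : ∀ i, f (d i) ≠ 0 := fun i =>
    (map_ne_zero_iff f (IsFractionRing.injective R (FractionRing R))).mpr (hd i)
  have hmap : (vecMulVec u v).map f = vecMulVec (f ∘ u) (f ∘ v) := by
    ext
    simp [vecMulVec_apply]
  rw [RingHom.map_det, map_add, RingHom.mapMatrix_apply, RingHom.mapMatrix_apply,
    diagonal_map (map_zero f), hmap]
  simp only [map_add, map_sum, map_prod, map_mul]
  exact det_diagonal_add_vecMulVec_of_field hfd (f ∘ u) (f ∘ v)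

end Matrix

namespace Polynomial

theorem derivative_prod_X_sub_C_mul_X_sub_C {R ι : Type*} [CommRing R] [DecidableEq ι]
    (s : Finset ι) (f : ι → R) (μ : R) :
    derivative ((∏ i ∈ s, (X - C (f i))) * (X - C μ)) =
      (#s + 1 : R[X]) * ∏ i ∈ s, (X - C (f i)) +
        ∑ i ∈ s, C (f i - μ) * ∏ j ∈ s.erase i, (X - C (f j)) := by
  have hsplit : ∀ i ∈ s, (∏ j ∈ s.erase i, (X - C (f j))) * (X - C μ) =
      ∏ j ∈ s, (X - C (f j)) + C (f i - μ) * ∏ j ∈ s.erase i, (X - C (f j)) := fun i hi => by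
    rw [← mul_prod_erase s _ hi, C_sub]
    ring
  simp only [derivative_mul, derivative_prod_finset, derivative_sub, derivative_X, derivative_C,
    sub_zero, mul_one]
  rw [sum_mul, sum_congr rfl hsplit, sum_add_distrib, sum_const, nsmul_eq_mul]
  ring

end Polynomial

theorem charmatrix_dCompanion (m : ℕ) (hn : 2 ≤ m + 1) (lam : Fin (m + 1) → ℂ) :
    charmatrix (dCompanion (m + 1) hn lam : Matrix (Fin m) (Fin m) ℂ) =
      diagonal (fun i => X - C (lam i.castSucc)) +
        vecMulVec (fun i => C (((m + 1 : ℕ) : ℂ)⁻¹ * (lam i.castSucc - lam (Fin.last m)))) 1 := by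
  ext i j : 1
  have hlast : lam ⟨m, by omega⟩ = lam (Fin.last m) := rfl
  have hi : lam ⟨i, by omega⟩ = lam i.castSucc := rfl
  rcases eq_or_ne i j with rfl | h <;>
    simp [dCompanion, allOnesMatrix, *] <;> ring

/-- **Cheung–Ng D-companion matrix theorem.**  The characteristic polynomial of the
D-companion matrix of `p(z) = ∏ᵢ (z − λᵢ)` equals `p′(z)/n`; equivalently the eigenvalues
of the D-companion matrix (with multiplicity) are exactly the roots of `p′`. -/
theorem dCompanion_charpoly (n : ℕ) (hn : 2 ≤ n) (lam : Fin n → ℂ) :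
    (dCompanion n hn lam).charpoly =
      Polynomial.C ((n : ℂ)⁻¹) *
        Polynomial.derivative (∏ i, (Polynomial.X - Polynomial.C (lam i))) := by
  obtain ⟨m, rfl⟩ : ∃ m, n = m + 1 := ⟨n - 1, by omega⟩
  -- `Fin (m + 1 - 1)` is only definitionally `Fin m`; switch to the `Fin m` instances so that
  -- the sums from both sides are syntactically over the same index type.
  change @charpoly ℂ _ (Fin m) _ _ (dCompanion (m + 1) hn lam) = _
  rw [charpoly, charmatrix_dCompanion, det_diagonal_add_vecMulVec fun i => X_sub_C_ne_zero _,
    Fin.prod_univ_castSucc, derivative_prod_X_sub_C_mul_X_sub_C, card_univ, Fintype.card_fin]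
  have hinv : C (((m + 1 : ℕ) : ℂ)⁻¹) * ((m : ℂ[X]) + 1) = 1 := by
    rw [← Nat.cast_succ, ← map_natCast C, ← C_mul,
      inv_mul_cancel₀ (Nat.cast_ne_zero.mpr m.succ_ne_zero), C_1]
  simp only [Pi.one_apply, mul_one, C_mul, mul_add, mul_sum, ← mul_assoc, hinv, one_mul]
end
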